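/- arXiv:2511.02585 — 2 statements merged into one kernel-verified Lean document; each statement's English description precedes it below -/
import Mathlib

section
/- Let q be an even integer with 0 < q < m. Then for every t ∈ V_m, ξ⁺_q(t)·(ξ⁻_1(t) − ξ⁻_1(q)) = (q+1)·ξ⁻_{q+1}(t) in R, where ξ⁻_1(q) ∈ R is the value of ξ⁻_1 at the vertex q. -/
/-!
Write `q = 2p`. On each half of `V_m` the classes `ξ⁺_{2p}` and `ξ⁻_{2p+1}` have a single closed
form, in `j = ⌊t/2⌋` for `t ≥ 0` and in `i = ⌊(1-t)/2⌋` for `t < 0`: where the class vanishes, so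
does its binomial coefficient. The difference `ξ⁻_1(t) - ξ⁻_1(2p)` factors as
`(j-p)(-α+(j+p)δ)`, resp. `(i+p)(α+(i-p)δ)`; the linear factor extends `P⁻`, resp. `P⁺`, by one
term, and with `n = j+p`, resp. `n = i+p`, the scalar becomes `(2p+1)·C(n,2p+1)` by
`C(n,k)(n-k) = (k+1)C(n,k+1)`, resp. `n·C(n-1,k) = (k+1)C(n,k+1)`.
-/

noncomputable section

open Finset MvPolynomial

/-- The coefficient ring `R = ℚ[α,δ]`, realized as polynomials in two variables. -/
abbrev Rpoly : Type := MvPolynomial (Fin 2) ℚ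

/-- The variable `α`. -/
def va : Rpoly := X 0

/-- The variable `δ`. -/
def vd : Rpoly := X 1

/-- `P⁻(a,b) = ∏_{k=a}^{b} (−α + k·δ)`. -/
def Pneg (a b : ℤ) : Rpoly :=
  ∏ k ∈ Finset.Icc a b, (-va + MvPolynomial.C (k : ℚ) * vd)

/-- `P⁺(a,b) = ∏_{k=a}^{b} (α + k·δ)`. -/
def Ppos (a b : ℤ) : Rpoly :=
  ∏ k ∈ Finset.Icc a b, (va + MvPolynomial.C (k : ℚ) * vd)

/-- Binomial coefficient `C(n,q)` (all uses have `n ≥ 0`). -/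
def B (n : ℤ) (q : ℕ) : ℚ := (n.toNat).choose q

/-- The Knutson–Tao class `ξ⁺_q = ξ(m+q, m−q)`, as a function on vertices `t`
(the vertex `t` encodes the pair `(m+t, m−t)`). -/
def xiP (m : ℤ) (q : ℕ) (t : ℤ) : Rpoly :=
  if (q : ℤ) ≤ t ∧ t ≤ m then
    MvPolynomial.C (B (⌈((t : ℚ) - (q : ℚ) + 1) / 2⌉ + q - 1) q) *
      Pneg (⌈((t : ℚ) - (q : ℚ) + 1) / 2⌉ - 1) (⌈((t : ℚ) - (q : ℚ) + 1) / 2⌉ + q - 2)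
  else if -m ≤ t ∧ t ≤ -((q : ℤ) + 1) then
    MvPolynomial.C (B (⌈(-(t : ℚ) - (q : ℚ)) / 2⌉ + q - 1) q) *
      Ppos (⌈(-(t : ℚ) - (q : ℚ)) / 2⌉ + 1) (⌈(-(t : ℚ) - (q : ℚ)) / 2⌉ + q)
  else 0

/-- The Knutson–Tao class `ξ⁻_q = ξ(m−q, m+q)`. -/
def xiM (m : ℤ) (q : ℕ) (t : ℤ) : Rpoly :=
  if (q : ℤ) + 1 ≤ t ∧ t ≤ m then
    MvPolynomial.C (B (⌈((t : ℚ) - (q : ℚ)) / 2⌉ + q - 1) q) *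
      Pneg (⌈((t : ℚ) - (q : ℚ)) / 2⌉) (⌈((t : ℚ) - (q : ℚ)) / 2⌉ + q - 1)
  else if -m ≤ t ∧ t ≤ -(q : ℤ) then
    MvPolynomial.C (B (⌈(-(t : ℚ) - (q : ℚ) + 1) / 2⌉ + q - 1) q) *
      Ppos (⌈(-(t : ℚ) - (q : ℚ) + 1) / 2⌉) (⌈(-(t : ℚ) - (q : ℚ) + 1) / 2⌉ + q - 1)
  else 0

/-- The weight of the vertex `t`: `w(t) = ((1−2t)/2)·α + (t(t−1)/2)·δ`. -/
def w (t : ℤ) : Rpoly :=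
  MvPolynomial.C ((1 - 2 * (t : ℚ)) / 2) * va +
    MvPolynomial.C (((t : ℚ) * ((t : ℚ) - 1)) / 2) * vd

lemma ceil_div_two_eq {x : ℚ} (k : ℤ) (hx : x = k) : ⌈x / 2⌉ = (k + 1) / 2 := by
  have h := Rat.ceil_intCast_div_natCast k 2
  push_cast at h
  rw [hx, h]
  omega

namespace B

lemma eq_zero_of_lt {n : ℤ} {k : ℕ} (h₀ : 0 ≤ n) (h : n < k) : B n k = 0 := by
  simp only [B, Nat.cast_eq_zero]
  exact Nat.choose_eq_zero_of_lt (by omega)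

lemma one_right {n : ℤ} (h : 0 ≤ n) : B n 1 = n := by
  lift n to ℕ using h
  simp [B]

lemma mul_sub_eq {n : ℤ} (h : 0 ≤ n) (k : ℕ) :
    B n k * (n - k) = (k + 1) * B n (k + 1) := by
  lift n to ℕ using h
  simp only [B, Int.toNat_natCast, Int.cast_natCast]
  rcases le_or_gt k n with hk | hk
  · rw [← Nat.cast_sub hk, mul_comm ((k : ℚ) + 1)]
    exact_mod_cast (Nat.choose_succ_right_eq n k).symm
  · simp [Nat.choose_eq_zero_of_lt hk, Nat.choose_eq_zero_of_lt (Nat.lt_succ_of_lt hk)]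

lemma mul_sub_one_eq {n : ℤ} (h : 1 ≤ n) (k : ℕ) :
    n * B (n - 1) k = (k + 1) * B n (k + 1) := by
  obtain ⟨n, rfl⟩ : ∃ n' : ℕ, n = n' + 1 := ⟨(n - 1).toNat, by omega⟩
  simp only [B, add_sub_cancel_right, Int.toNat_natCast]
  rw [show ((n : ℤ) + 1).toNat = n + 1 by omega, mul_comm ((k : ℚ) + 1)]
  exact_mod_cast Nat.add_one_mul_choose_eq n k

end B

lemma Pneg_self (a : ℤ) : Pneg a a = -va + C (a : ℚ) * vd := by
  simp [Pneg]

lemma Ppos_self (a : ℤ) : Ppos a a = va + C (a : ℚ) * vd := by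
  simp [Ppos]

lemma Pneg_eq_mul {a b : ℤ} (h : a ≤ b) :
    Pneg a b = Pneg a (b - 1) * (-va + C (b : ℚ) * vd) := by
  rw [Pneg, ← Finset.insert_Icc_sub_one_right_eq_Icc h, Finset.prod_insert (by simp), mul_comm]
  rfl

lemma Ppos_eq_mul {a b : ℤ} (h : a ≤ b) :
    Ppos a b = (va + C (a : ℚ) * vd) * Ppos (a + 1) b := by
  rw [Ppos, ← Finset.insert_Icc_add_one_left_eq_Icc h, Finset.prod_insert (by simp)]
  rfl

section ClosedForms

variable (m : ℤ) (p : ℕ) {t : ℤ}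

lemma xiP_two_mul_of_nonneg (h₀ : 0 ≤ t) (hm : t ≤ m) :
    xiP m (2 * p) t = C (B (t / 2 + p) (2 * p)) * Pneg (t / 2 - p) (t / 2 + p - 1) := by
  unfold xiP
  split_ifs with h₁ h₂
  · rw [ceil_div_two_eq (t - 2 * p + 1) (by push_cast; ring),
      show (t - 2 * p + 1 + 1) / 2 = t / 2 - p + 1 by omega]
    push_cast
    ring_nf
  · omega
  · rw [B.eq_zero_of_lt (by omega) (by push_cast at h₁ ⊢; omega), map_zero, zero_mul]

lemma xiM_two_mul_add_one_of_nonneg (h₀ : 0 ≤ t) (hm : t ≤ m) :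
    xiM m (2 * p + 1) t = C (B (t / 2 + p) (2 * p + 1)) * Pneg (t / 2 - p) (t / 2 + p) := by
  unfold xiM
  split_ifs with h₁ h₂
  · rw [ceil_div_two_eq (t - (2 * p + 1)) (by push_cast; ring),
      show (t - (2 * p + 1) + 1) / 2 = t / 2 - p by omega]
    push_cast
    ring_nf
  · omega
  · rw [B.eq_zero_of_lt (by omega) (by push_cast at h₁ ⊢; omega), map_zero, zero_mul]

lemma xiP_two_mul_of_neg (hm : -m ≤ t) (h₀ : t < 0) :
    xiP m (2 * p) t =
      C (B ((1 - t) / 2 + p - 1) (2 * p)) * Ppos ((1 - t) / 2 - p + 1) ((1 - t) / 2 + p) := by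
  unfold xiP
  split_ifs with h₁ h₂
  · omega
  · rw [ceil_div_two_eq (-t - 2 * p) (by push_cast; ring),
      show (-t - 2 * p + 1) / 2 = (1 - t) / 2 - p by omega]
    push_cast
    ring_nf
  · rw [B.eq_zero_of_lt (by omega) (by push_cast at h₂ ⊢; omega), map_zero, zero_mul]

lemma xiM_two_mul_add_one_of_neg (hm : -m ≤ t) (h₀ : t < 0) :
    xiM m (2 * p + 1) t =
      C (B ((1 - t) / 2 + p) (2 * p + 1)) * Ppos ((1 - t) / 2 - p) ((1 - t) / 2 + p) := by
  unfold xiM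
  split_ifs with h₁ h₂
  · omega
  · rw [ceil_div_two_eq (-t - (2 * p + 1) + 1) (by push_cast; ring),
      show (-t - (2 * p + 1) + 1 + 1) / 2 = (1 - t) / 2 - p by omega]
    push_cast
    ring_nf
  · rw [B.eq_zero_of_lt (by omega) (by push_cast at h₂ ⊢; omega), map_zero, zero_mul]

lemma xiM_one_of_nonneg (h₀ : 0 ≤ t) (hm : t ≤ m) :
    xiM m 1 t = C ((t / 2 : ℤ) : ℚ) * (-va + C ((t / 2 : ℤ) : ℚ) * vd) := by
  have h := xiM_two_mul_add_one_of_nonneg m 0 h₀ hm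
  simp only [mul_zero, zero_add, Nat.cast_zero, add_zero, sub_zero] at h
  rw [h, B.one_right (by omega), Pneg_self]

lemma xiM_one_of_neg (hm : -m ≤ t) (h₀ : t < 0) :
    xiM m 1 t = C (((1 - t) / 2 : ℤ) : ℚ) * (va + C (((1 - t) / 2 : ℤ) : ℚ) * vd) := by
  have h := xiM_two_mul_add_one_of_neg m 0 hm h₀
  simp only [mul_zero, zero_add, Nat.cast_zero, add_zero, sub_zero] at h
  rw [h, B.one_right (by omega), Ppos_self]

end ClosedForms

section Identities

variable (p : ℕ)

lemma B_mul_Pneg_mul_sub {j : ℤ} (hj : 0 ≤ j + p) :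
    C (B (j + p) (2 * p)) * Pneg (j - p) (j + p - 1) *
        (C (j : ℚ) * (-va + C (j : ℚ) * vd) - C (p : ℚ) * (-va + C (p : ℚ) * vd)) =
      ((2 * p + 1 : ℕ) : Rpoly) * (C (B (j + p) (2 * p + 1)) * Pneg (j - p) (j + p)) := by
  have hlin : C (j : ℚ) * (-va + C (j : ℚ) * vd) - C (p : ℚ) * (-va + C (p : ℚ) * vd)
      = C ((j - p : ℤ) : ℚ) * (-va + C ((j + p : ℤ) : ℚ) * vd) := by
    push_cast
    simp only [map_sub, map_add]
    ring
  have hB : B (j + p) (2 * p) * ((j - p : ℤ) : ℚ) =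
      ((2 * p + 1 : ℕ) : ℚ) * B (j + p) (2 * p + 1) := by
    have h := B.mul_sub_eq hj (2 * p)
    push_cast at h ⊢
    linear_combination h
  have hC := congrArg (C (σ := Fin 2)) hB
  rw [map_mul, map_mul, map_natCast] at hC
  rw [hlin, Pneg_eq_mul (by omega : j - p ≤ j + p)]
  linear_combination Pneg (j - p) (j + p - 1) * (-va + C ((j + p : ℤ) : ℚ) * vd) * hC

lemma B_mul_Ppos_mul_sub {i : ℤ} (hi : 1 ≤ i) :
    C (B (i + p - 1) (2 * p)) * Ppos (i - p + 1) (i + p) *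
        (C (i : ℚ) * (va + C (i : ℚ) * vd) - C (p : ℚ) * (-va + C (p : ℚ) * vd)) =
      ((2 * p + 1 : ℕ) : Rpoly) * (C (B (i + p) (2 * p + 1)) * Ppos (i - p) (i + p)) := by
  have hlin : C (i : ℚ) * (va + C (i : ℚ) * vd) - C (p : ℚ) * (-va + C (p : ℚ) * vd)
      = C ((i + p : ℤ) : ℚ) * (va + C ((i - p : ℤ) : ℚ) * vd) := by
    push_cast
    simp only [map_sub, map_add]
    ring
  have hB : ((i + p : ℤ) : ℚ) * B (i + p - 1) (2 * p) =
      ((2 * p + 1 : ℕ) : ℚ) * B (i + p) (2 * p + 1) := by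
    have h := B.mul_sub_one_eq (by omega : 1 ≤ i + p) (2 * p)
    push_cast at h ⊢
    linear_combination h
  have hC := congrArg (C (σ := Fin 2)) hB
  rw [map_mul, map_mul, map_natCast] at hC
  rw [hlin, Ppos_eq_mul (by omega : i - p ≤ i + p)]
  linear_combination (va + C ((i - p : ℤ) : ℚ) * vd) * Ppos (i - p + 1) (i + p) * hC

end Identities

theorem statement6_general (m : ℕ) (q : ℕ) (heven : Even q) (hqm : q < m)
    (t : ℤ) (ht1 : -(m : ℤ) ≤ t) (ht2 : t ≤ (m : ℤ)) :
    xiP m q t * (xiM m 1 t - xiM m 1 (q : ℤ)) = ((q + 1 : ℕ) : Rpoly) * xiM m (q + 1) t := by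
  obtain ⟨p, rfl⟩ := heven.two_dvd
  have hq : xiM m 1 ((2 * p : ℕ) : ℤ) = C (p : ℚ) * (-va + C (p : ℚ) * vd) := by
    rw [xiM_one_of_nonneg (m : ℤ) (by positivity) (by omega),
      show ((2 * p : ℕ) : ℤ) / 2 = p by omega, Int.cast_natCast]
  rcases lt_or_ge t 0 with ht | ht
  · rw [xiP_two_mul_of_neg m p ht1 ht, xiM_one_of_neg m ht1 ht, hq,
      xiM_two_mul_add_one_of_neg m p ht1 ht]
    exact B_mul_Ppos_mul_sub p (by omega)
  · rw [xiP_two_mul_of_nonneg m p ht ht2, xiM_one_of_nonneg m ht ht2, hq,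
      xiM_two_mul_add_one_of_nonneg m p ht ht2]
    exact B_mul_Pneg_mul_sub p (by omega)

/-- for even `0 < q < m`,
`ξ⁺_q · (ξ⁻_1 − ξ⁻_1(q)) = (q+1) · ξ⁻_{q+1}` pointwise on `V_m`. -/
theorem statement6 (m : ℕ) (hm : 1 ≤ m) (q : ℕ) (heven : Even q)
    (hq0 : 0 < q) (hqm : q < m)
    (t : ℤ) (ht1 : -(m : ℤ) ≤ t) (ht2 : t ≤ (m : ℤ)) :
    xiP m q t * (xiM m 1 t - xiM m 1 (q : ℤ)) = ((q + 1 : ℕ) : Rpoly) * xiM m (q + 1) t :=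
  statement6_general m q heven hqm t ht1 ht2
end
end

section
/- Let q be an odd integer with 0 < q < m. Then for every t ∈ V_m, ξ⁻_q(t)·(ξ⁺_1(t) − ξ⁺_1(−q)) = q·ξ⁺_{q+1}(t) + ξ⁻_{q+1}(t) in R, where ξ⁺_1(−q) ∈ R is the value of ξ⁺_1 at the vertex −q. -/
noncomputable section

open Finset MvPolynomial

/-!
Every class is, vertex by vertex, a binomial coefficient times a product of consecutive linear
forms `∓α + kδ`. Because `q = 2p + 1` is odd, `ξ⁺_1(-q) = p(α + (p + 1)δ)`, and the difference
`ξ⁺_1(t) - ξ⁺_1(-q)` factors as a constant times a single linear form. Peeling one linear factor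
off each product exposes a common product on both sides, and what remains is Pascal's rule
together with `C(n, k + 1)(k + 1) = C(n, k)(n - k)`. There are four cases, by the sign of `t` and
the parity of `t ∓ q`; for `-q ≤ t ≤ q` both sides vanish.
-/

lemma ceil_half_eq {x : ℚ} {n c : ℤ} (hx : x = n) (h : 2 * c - 1 ≤ n ∧ n ≤ 2 * c) :
    ⌈x / 2⌉ = c := by
  have h₁ : (2 * c - 1 : ℚ) ≤ n := by exact_mod_cast h.1
  have h₂ : (n : ℚ) ≤ 2 * c := by exact_mod_cast h.2
  rw [Int.ceil_eq_iff, hx]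
  constructor <;> linarith

lemma Pneg_eq_mul_Pneg_add_one {a b : ℤ} (h : a ≤ b) :
    Pneg a b = (-va + (a : Rpoly) * vd) * Pneg (a + 1) b := by
  rw [Pneg, Pneg, ← Finset.insert_Icc_add_one_left_eq_Icc h, Finset.prod_insert (by simp),
    map_intCast]

lemma Pneg_eq_Pneg_sub_one_mul {a b : ℤ} (h : a ≤ b) :
    Pneg a b = Pneg a (b - 1) * (-va + (b : Rpoly) * vd) := by
  rw [Pneg, Pneg, ← Finset.insert_Icc_sub_one_right_eq_Icc h, Finset.prod_insert (by simp),
    map_intCast, mul_comm]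

lemma Ppos_eq_mul_Ppos_add_one {a b : ℤ} (h : a ≤ b) :
    Ppos a b = (va + (a : Rpoly) * vd) * Ppos (a + 1) b := by
  rw [Ppos, Ppos, ← Finset.insert_Icc_add_one_left_eq_Icc h, Finset.prod_insert (by simp),
    map_intCast]

lemma Ppos_eq_Ppos_sub_one_mul {a b : ℤ} (h : a ≤ b) :
    Ppos a b = Ppos a (b - 1) * (va + (b : Rpoly) * vd) := by
  rw [Ppos, Ppos, ← Finset.insert_Icc_sub_one_right_eq_Icc h, Finset.prod_insert (by simp),
    map_intCast, mul_comm]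

lemma add_choose_succ_mul (s q : ℕ) :
    (s + q).choose (q + 1) * (q + 1) = (s + q).choose q * s := by
  rw [Nat.choose_succ_right_eq, Nat.add_sub_cancel]

section Values

variable {m : ℤ} {q s : ℕ} {t : ℤ}

lemma xiP_eq_of_pos (ht : t ≤ m) (hs : t - q = 2 * s ∨ t - q = 2 * s + 1) :
    xiP m q t = C ((s + q).choose q : ℚ) * Pneg s (s + q - 1) := by
  have hc : ⌈((t : ℚ) - q + 1) / 2⌉ = s + 1 :=
    ceil_half_eq (n := t - q + 1) (by push_cast; ring) (by omega)
  rw [xiP, if_pos ⟨by omega, ht⟩, hc, B, show ((s : ℤ) + 1 + q - 1).toNat = s + q by omega,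
    add_sub_cancel_right, show (s : ℤ) + 1 + q - 2 = s + q - 1 by ring]

lemma xiP_eq_of_neg (ht : -m ≤ t) (hs : -t - q = 2 * s + 1 ∨ -t - q = 2 * s + 2) :
    xiP m q t = C ((s + q).choose q : ℚ) * Ppos (s + 2) (s + q + 1) := by
  have hc : ⌈(-(t : ℚ) - q) / 2⌉ = s + 1 :=
    ceil_half_eq (n := -t - q) (by push_cast; ring) (by omega)
  rw [xiP, if_neg (by omega), if_pos ⟨ht, by omega⟩, hc, B,
    show ((s : ℤ) + 1 + q - 1).toNat = s + q by omega,
    show (s : ℤ) + 1 + 1 = s + 2 by ring, show (s : ℤ) + 1 + q = s + q + 1 by ring]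

lemma xiM_eq_of_pos (ht : t ≤ m) (hs : t - q = 2 * s + 1 ∨ t - q = 2 * s + 2) :
    xiM m q t = C ((s + q).choose q : ℚ) * Pneg (s + 1) (s + q) := by
  have hc : ⌈((t : ℚ) - q) / 2⌉ = s + 1 :=
    ceil_half_eq (n := t - q) (by push_cast; ring) (by omega)
  rw [xiM, if_pos ⟨by omega, ht⟩, hc, B, show ((s : ℤ) + 1 + q - 1).toNat = s + q by omega,
    show (s : ℤ) + 1 + q - 1 = s + q by ring]

lemma xiM_eq_of_neg (ht : -m ≤ t) (hs : -t - q = 2 * s ∨ -t - q = 2 * s + 1) :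
    xiM m q t = C ((s + q).choose q : ℚ) * Ppos (s + 1) (s + q) := by
  have hc : ⌈(-(t : ℚ) - q + 1) / 2⌉ = s + 1 :=
    ceil_half_eq (n := -t - q + 1) (by push_cast; ring) (by omega)
  rw [xiM, if_neg (by omega), if_pos ⟨ht, by omega⟩, hc, B,
    show ((s : ℤ) + 1 + q - 1).toNat = s + q by omega,
    show (s : ℤ) + 1 + q - 1 = s + q by ring]

lemma xiP_eq_zero (h₁ : -(q + 1 : ℤ) < t) (h₂ : t < q) : xiP m q t = 0 := by
  rw [xiP, if_neg (by omega), if_neg (by omega)]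

lemma xiM_eq_zero (h₁ : -(q : ℤ) < t) (h₂ : t ≤ q) : xiM m q t = 0 := by
  rw [xiM, if_neg (by omega), if_neg (by omega)]

-- At `s = 0` the class vanishes, matching `q.choose (q + 1) = 0`.
lemma xiM_succ_eq_of_pos (ht : t ≤ m) (hs : t - q = 2 * s + 1) :
    xiM m (q + 1) t = C ((s + q).choose (q + 1) : ℚ) * Pneg s (s + q) := by
  rcases s with _ | s
  · simp [xiM_eq_zero (m := m) (q := q + 1) (t := t) (by omega) (by omega)]
  · rw [xiM_eq_of_pos (s := s) ht (by omega)]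
    push_cast
    ring_nf

lemma xiP_succ_eq_of_neg (ht : -m ≤ t) (hs : -t - q = 2 * s + 1) :
    xiP m (q + 1) t = C ((s + q).choose (q + 1) : ℚ) * Ppos (s + 1) (s + q + 1) := by
  rcases s with _ | s
  · simp [xiP_eq_zero (m := m) (q := q + 1) (t := t) (by omega) (by omega)]
  · rw [xiP_eq_of_neg (s := s) ht (by omega)]
    push_cast
    ring_nf

end Values

lemma xiP_one_eq_of_pos {m t : ℤ} {s : ℕ} (ht : t ≤ m)
    (hs : t - 1 = 2 * s ∨ t - 1 = 2 * s + 1) :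
    xiP m 1 t = ((s : Rpoly) + 1) * (-va + s * vd) := by
  rw [xiP_eq_of_pos ht (by exact_mod_cast hs), Pneg, Nat.cast_one, add_sub_cancel_right,
    Finset.Icc_self, Finset.prod_singleton, Nat.choose_one_right]
  simp only [map_natCast, map_intCast]
  push_cast
  rfl

lemma xiP_one_eq_of_neg {m t : ℤ} {s : ℕ} (ht : -m ≤ t)
    (hs : -t - 1 = 2 * s + 1 ∨ -t - 1 = 2 * s + 2) :
    xiP m 1 t = ((s : Rpoly) + 1) * (va + ((s : Rpoly) + 2) * vd) := by
  rw [xiP_eq_of_neg ht (by exact_mod_cast hs), Ppos, Nat.cast_one,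
    show (s : ℤ) + 1 + 1 = s + 2 by ring, Finset.Icc_self, Finset.prod_singleton,
    Nat.choose_one_right]
  simp only [map_natCast, map_intCast]
  push_cast
  rfl

lemma xiP_one_neg_of_eq_two_mul_add_one {m : ℤ} {p q : ℕ} (hq : q = 2 * p + 1)
    (hm : (q : ℤ) ≤ m) :
    xiP m 1 (-(q : ℤ)) = (p : Rpoly) * (va + ((p : Rpoly) + 1) * vd) := by
  rcases p with _ | p
  · simp [xiP_eq_zero, hq]
  · rw [xiP_one_eq_of_neg (s := p) (by omega) (by omega)]
    push_cast
    ring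

/-- `-q` is the vertex `(m - q, m + q)` of `ξ⁻_q`, so this is the equivariant Chevalley rule
for `ξ⁻_q · ξ⁺_1` at the vertex `t`. -/
def ChevalleyRuleAt (m q : ℕ) (t : ℤ) : Prop :=
  xiM m q t * (xiP m 1 t - xiP m 1 (-(q : ℤ))) = (q : Rpoly) * xiP m (q + 1) t + xiM m (q + 1) t

lemma chevalleyRuleAt_of_abs_le {m q : ℕ} {t : ℤ} (h₁ : -(q : ℤ) ≤ t) (h₂ : t ≤ q) :
    ChevalleyRuleAt m q t := by
  rw [ChevalleyRuleAt, xiP_eq_zero (q := q + 1) (by omega) (by omega),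
    xiM_eq_zero (q := q + 1) (by omega) (by omega), mul_zero, add_zero]
  rcases h₁.eq_or_lt with rfl | hlt
  · rw [sub_self, mul_zero]
  · rw [xiM_eq_zero hlt h₂, zero_mul]

section OddRank

variable {m : ℤ} {q s : ℕ} {t : ℤ}

lemma xiP_one_sub_xiP_one_neg_of_pos (hq : Odd q) (hm : (q : ℤ) ≤ m) (ht : t ≤ m)
    (hs : t - q = 2 * s ∨ t - q = 2 * s + 1) :
    xiP m 1 t - xiP m 1 (-(q : ℤ)) = ((s : Rpoly) + q) * (-va + s * vd) := by
  obtain ⟨p, hp⟩ := hq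
  rw [xiP_one_neg_of_eq_two_mul_add_one hp hm, xiP_one_eq_of_pos (s := p + s) ht (by omega), hp]
  push_cast
  ring

lemma xiP_one_sub_xiP_one_neg_of_neg (hq : Odd q) (hm : (q : ℤ) ≤ m) (ht : -m ≤ t)
    (hs : -t - q = 2 * s + 1 ∨ -t - q = 2 * s + 2) :
    xiP m 1 t - xiP m 1 (-(q : ℤ)) =
      ((s : Rpoly) + 1) * (va + ((s : Rpoly) + q + 1) * vd) := by
  obtain ⟨p, hp⟩ := hq
  rw [xiP_one_neg_of_eq_two_mul_add_one hp hm, xiP_one_eq_of_neg (s := p + s) ht (by omega), hp]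
  push_cast
  ring

end OddRank

section Cases

variable {m q s : ℕ} {t : ℤ}

lemma chevalleyRuleAt_of_sub_eq_even (hq : Odd q) (hm : q ≤ m) (ht : t ≤ m)
    (hs : t - q = 2 * s + 2) : ChevalleyRuleAt m q t := by
  rw [ChevalleyRuleAt, xiP_one_sub_xiP_one_neg_of_pos (s := s + 1) hq (by omega) ht (by omega),
    xiM_eq_of_pos (q := q) (s := s) ht (by omega),
    xiP_eq_of_pos (q := q + 1) (s := s) ht (by omega),
    xiM_eq_of_pos (q := q + 1) (s := s) ht (by omega)]
  simp only [map_natCast]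
  push_cast
  rw [show (s : ℤ) + (q + 1) - 1 = s + q by ring, Pneg_eq_mul_Pneg_add_one (a := s) (by omega),
    Pneg_eq_Pneg_sub_one_mul (b := s + (q + 1)) (by omega),
    show (s : ℤ) + (q + 1) - 1 = s + q by ring]
  have key : ((s + q + 1 : ℕ) : Rpoly) * (s + q).choose q =
      (s + (q + 1)).choose (q + 1) * (q + 1 : ℕ) := by
    exact_mod_cast Nat.add_one_mul_choose_eq (s + q) q
  push_cast at key ⊢
  linear_combination (Pneg (s + 1) (s + q) * (-va + (s + 1) * vd)) * key

lemma chevalleyRuleAt_of_sub_eq_odd (hq : Odd q) (hm : q ≤ m) (ht : t ≤ m)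
    (hs : t - q = 2 * s + 1) : ChevalleyRuleAt m q t := by
  rw [ChevalleyRuleAt, xiP_one_sub_xiP_one_neg_of_pos (s := s) hq (by omega) ht (by omega),
    xiM_eq_of_pos (q := q) (s := s) ht (by omega),
    xiP_eq_of_pos (q := q + 1) (s := s) ht (by omega), xiM_succ_eq_of_pos ht hs]
  simp only [map_natCast]
  push_cast
  rw [show (s : ℤ) + (q + 1) - 1 = s + q by ring, Pneg_eq_mul_Pneg_add_one (a := s) (by omega)]
  have pascal :
      ((s + (q + 1)).choose (q + 1) : Rpoly) = (s + q).choose q + (s + q).choose (q + 1) := by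
    exact_mod_cast Nat.choose_succ_succ' (s + q) q
  have key : ((s + q).choose (q + 1) : Rpoly) * (q + 1 : ℕ) = (s + q).choose q * s := by
    exact_mod_cast add_choose_succ_mul s q
  push_cast at key ⊢
  linear_combination (-va + s * vd) * Pneg (s + 1) (s + q) * (-q * pascal - key)

lemma chevalleyRuleAt_of_neg_sub_eq_odd (hq : Odd q) (hm : q ≤ m) (ht : -m ≤ t)
    (hs : -t - q = 2 * s + 1) : ChevalleyRuleAt m q t := by
  rw [ChevalleyRuleAt, xiP_one_sub_xiP_one_neg_of_neg (s := s) hq (by omega) ht (by omega),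
    xiM_eq_of_neg (q := q) (s := s) ht (by omega), xiP_succ_eq_of_neg ht hs,
    xiM_eq_of_neg (q := q + 1) (s := s) ht (by omega)]
  simp only [map_natCast]
  push_cast
  rw [show (s : ℤ) + (q + 1) = s + q + 1 by ring,
    Ppos_eq_Ppos_sub_one_mul (b := s + q + 1) (by omega), add_sub_cancel_right]
  have pascal :
      ((s + (q + 1)).choose (q + 1) : Rpoly) = (s + q).choose q + (s + q).choose (q + 1) := by
    exact_mod_cast Nat.choose_succ_succ' (s + q) q
  have key : ((s + q).choose (q + 1) : Rpoly) * (q + 1 : ℕ) = (s + q).choose q * s := by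
    exact_mod_cast add_choose_succ_mul s q
  push_cast at key ⊢
  linear_combination Ppos (s + 1) (s + q) * (va + (s + q + 1) * vd) * (-pascal - key)

lemma chevalleyRuleAt_of_neg_sub_eq_even (hq : Odd q) (hm : q ≤ m) (ht : -m ≤ t)
    (hs : -t - q = 2 * s + 2) : ChevalleyRuleAt m q t := by
  rw [ChevalleyRuleAt, xiP_one_sub_xiP_one_neg_of_neg (s := s) hq (by omega) ht (by omega),
    xiM_eq_of_neg (q := q) (s := s + 1) ht (by omega),
    xiP_eq_of_neg (q := q + 1) (s := s) ht (by omega),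
    xiM_eq_of_neg (q := q + 1) (s := s) ht (by omega), show s + (q + 1) = s + 1 + q by omega]
  simp only [map_natCast]
  push_cast
  rw [show (s : ℤ) + 1 + 1 = s + 2 by ring, show (s : ℤ) + 1 + q = s + q + 1 by ring,
    show (s : ℤ) + (q + 1) + 1 = s + q + 2 by ring, show (s : ℤ) + (q + 1) = s + q + 1 by ring,
    Ppos_eq_Ppos_sub_one_mul (b := s + q + 2) (by omega),
    Ppos_eq_mul_Ppos_add_one (a := s + 1) (by omega),
    show (s : ℤ) + q + 2 - 1 = s + q + 1 by ring, show (s : ℤ) + 1 + 1 = s + 2 by ring]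
  have key : ((s + 1 + q).choose (q + 1) : Rpoly) * (q + 1 : ℕ) =
      (s + 1 + q).choose q * (s + 1 : ℕ) := by
    exact_mod_cast add_choose_succ_mul (s + 1) q
  push_cast at key ⊢
  linear_combination Ppos (s + 2) (s + q + 1) * (va + (s + q + 1) * vd) * (-key)

end Cases

lemma exists_eq_two_mul_add_one_or_add_two {n : ℤ} (h : 0 < n) :
    ∃ s : ℕ, n = 2 * s + 1 ∨ n = 2 * s + 2 :=
  ⟨((n - 1) / 2).toNat, by omega⟩

theorem statement11_general (m : ℕ) (q : ℕ) (hodd : Odd q) (hqm : q < m)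
    (t : ℤ) (ht1 : -(m : ℤ) ≤ t) (ht2 : t ≤ (m : ℤ)) :
    xiM m q t * (xiP m 1 t - xiP m 1 (-(q : ℤ))) =
      (q : Rpoly) * xiP m (q + 1) t + xiM m (q + 1) t := by
  change ChevalleyRuleAt m q t
  by_cases hpos : (q : ℤ) < t
  · obtain ⟨s, hs | hs⟩ := exists_eq_two_mul_add_one_or_add_two (sub_pos.mpr hpos)
    · exact chevalleyRuleAt_of_sub_eq_odd hodd hqm.le ht2 hs
    · exact chevalleyRuleAt_of_sub_eq_even hodd hqm.le ht2 hs
  by_cases hneg : t < -(q : ℤ)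
  · obtain ⟨s, hs | hs⟩ := exists_eq_two_mul_add_one_or_add_two (show 0 < -t - q by omega)
    · exact chevalleyRuleAt_of_neg_sub_eq_odd hodd hqm.le ht1 hs
    · exact chevalleyRuleAt_of_neg_sub_eq_even hodd hqm.le ht1 hs
  exact chevalleyRuleAt_of_abs_le (by omega) (by omega)

/-- for odd `0 < q < m`,
`ξ⁻_q · (ξ⁺_1 − ξ⁺_1(−q)) = q·ξ⁺_{q+1} + ξ⁻_{q+1}` pointwise on `V_m`. -/
theorem statement11 (m : ℕ) (hm : 1 ≤ m) (q : ℕ) (hodd : Odd q)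
    (hq0 : 0 < q) (hqm : q < m)
    (t : ℤ) (ht1 : -(m : ℤ) ≤ t) (ht2 : t ≤ (m : ℤ)) :
    xiM m q t * (xiP m 1 t - xiP m 1 (-(q : ℤ))) =
      (q : Rpoly) * xiP m (q + 1) t + xiM m (q + 1) t :=
  statement11_general m q hodd hqm t ht1 ht2
end
end
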